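/- arXiv:1909.04814 — 2 statements merged into one kernel-verified Lean document; each statement's English description precedes it below -/
import Mathlib

section
/- Testing the differential inequality against e^{-V}: there is a constant C' depending only on λ, γ, C, C(ε), d and ∫(|x|+1)e^{-V}dx such that ‖∇ψ_ε‖_{L¹_V(ℝ^d)} ≤ C'. (Proof: integrate (1/2)Δψ_ε e^{-V} by parts to get -(1/2)∫⟪∇ψ_ε, ∇V⟫e^{-V} ≥ -(γ/2)∫|∇ψ_ε|e^{-V}, then use λ - γ/2 > 0.) -/
open MeasureTheory Set Filter Topology
open scoped ENNReal

theorem integral_divergence_eq_zero {n : ℕ}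
    (F : (Fin n → ℝ) → (Fin n → ℝ))
    (F' : (Fin n → ℝ) → ((Fin n → ℝ) →L[ℝ] (Fin n → ℝ)))
    (hd : ∀ x, HasFDerivAt F (F' x) x)
    (hFi : ∀ i, Integrable (fun x => F x i) volume)
    (hdiv : Integrable (fun x => ∑ i, F' x (Pi.single i 1) i) volume) :
    ∫ x, ∑ i, F' x (Pi.single i 1) i = 0 := by
  cases n with
  | zero => simp
  | succ n =>
    set div : (Fin (n+1) → ℝ) → ℝ := fun x => ∑ i, F' x (Pi.single i 1) i with hdivdef
    have hFc : Continuous F := continuous_iff_continuousAt.2 fun x => (hd x).continuousAt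
    set e : (i : Fin (n+1)) → (ℝ × (Fin n → ℝ)) ≃ᵐ (Fin (n+1) → ℝ) :=
      fun i => (MeasurableEquiv.piFinSuccAbove (fun _ : Fin (n+1) => ℝ) i).symm with hedef
    have hesymm : ∀ (i : Fin (n+1)) (p : ℝ × (Fin n → ℝ)),
        e i p = i.insertNth p.1 (p.2 : ∀ _ : Fin n, ℝ) := fun i p => rfl
    set G : Fin (n+1) → ℝ → ℝ≥0∞ :=
      fun i t => ∫⁻ y : Fin n → ℝ, ‖F (e i (t, y)) i‖₊ with hGdef
    have hmeas : ∀ i : Fin (n+1), Measurable fun p : ℝ × (Fin n → ℝ) =>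
        (‖F (e i p) i‖₊ : ℝ≥0∞) := fun i =>
      ((hFc.measurable.comp (e i).measurable).eval.nnnorm).coe_nnreal_ennreal
    have hGmeas : ∀ i, Measurable (G i) := fun i => Measurable.lintegral_prod_right (hmeas i)
    have hGint : ∀ i : Fin (n+1), ∫⁻ t, G i t = ∫⁻ x, ‖F x i‖₊ := by
      intro i
      have mp := (volume_preserving_piFinSuccAbove (fun _ : Fin (n+1) => ℝ) i).symm
      rw [← mp.lintegral_comp (by fun_prop)]
      exact (lintegral_prod _ (hmeas i).aemeasurable).symm
    -- the total boundary mass at height t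
    set H : ℝ → ℝ≥0∞ := fun t => ∑ i, (G i t + G i (-t)) with hHdef
    have hHmeas : Measurable H := by
      apply Finset.measurable_sum
      intro i _
      exact (hGmeas i).add ((hGmeas i).comp measurable_neg)
    have hHfin : ∫⁻ t in Ioi (0:ℝ), H t ≠ ∞ := by
      have hneg : ∀ i : Fin (n+1), ∫⁻ t, G i (-t) = ∫⁻ t, G i t := by
        intro i
        conv_rhs => rw [← Measure.map_neg_eq_self (volume : Measure ℝ)]
        exact (lintegral_map (hGmeas i) measurable_neg).symm
      have h1 : ∫⁻ t in Ioi (0:ℝ), H t ≤ ∑ i : Fin (n+1), ((∫⁻ x, (‖F x i‖₊ : ℝ≥0∞)) + ∫⁻ x, (‖F x i‖₊ : ℝ≥0∞)) := by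
        calc ∫⁻ t in Ioi (0:ℝ), H t ≤ ∫⁻ t, H t := setLIntegral_le_lintegral _ _
          _ = ∑ i : Fin (n+1), ∫⁻ t, (G i t + G i (-t)) :=
              lintegral_finset_sum _ fun i _ => (hGmeas i).add ((hGmeas i).comp measurable_neg)
          _ = ∑ i : Fin (n+1), ((∫⁻ t, G i t) + ∫⁻ t, G i (-t)) := by
              refine Finset.sum_congr rfl fun i _ => ?_
              exact lintegral_add_left (μ := volume) (hGmeas i) (fun t => G i (-t))
          _ = ∑ i : Fin (n+1), ((∫⁻ x, (‖F x i‖₊ : ℝ≥0∞)) + ∫⁻ x, (‖F x i‖₊ : ℝ≥0∞)) := by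
              refine Finset.sum_congr rfl fun i _ => ?_
              simp only [hneg, hGint]
      refine ne_top_of_le_ne_top ?_ h1
      refine (ENNReal.sum_lt_top.2 fun i _ => ?_).ne
      exact ENNReal.add_lt_top.2 ⟨(hFi i).2, (hFi i).2⟩
-- MARK
    -- choose good radii
    have hsel : ∀ k : ℕ, ∃ Rk : ℝ, (k:ℝ) < Rk ∧ H Rk ≤ ENNReal.ofReal (1/(k+1)) := by
      intro k
      by_contra hcon
      push_neg at hcon
      have hlow : ∫⁻ t in Ioi (k:ℝ), ENNReal.ofReal (1/(k+1)) ≤ ∫⁻ t in Ioi (k:ℝ), H t :=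
        setLIntegral_mono hHmeas fun t ht => (hcon t ht).le
      rw [setLIntegral_const, Real.volume_Ioi, ENNReal.mul_top] at hlow
      · exact absurd (eq_top_iff.2 (hlow.trans (lintegral_mono_set (Ioi_subset_Ioi (Nat.cast_nonneg k)))))
          hHfin
      · simp only [ne_eq, ENNReal.ofReal_eq_zero, not_le]
        positivity
    choose R hRgt hRle using hsel
    have hR0 : ∀ k : ℕ, (0:ℝ) ≤ R k := fun k => le_of_lt (lt_of_le_of_lt (Nat.cast_nonneg k) (hRgt k))
    -- divergence theorem on the boxes
    have hdivthm : ∀ k : ℕ,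
        ∫ x in Icc (fun _ => -(R k) : Fin (n+1) → ℝ) (fun _ => R k), div x =
        ∑ i : Fin (n+1),
          ((∫ x : Fin n → ℝ in Icc ((fun _ => -(R k)) ∘ i.succAbove) ((fun _ => R k) ∘ i.succAbove),
              F (i.insertNth (R k) x) i) -
           ∫ x : Fin n → ℝ in Icc ((fun _ => -(R k)) ∘ i.succAbove) ((fun _ => R k) ∘ i.succAbove),
              F (i.insertNth (-(R k)) x) i) := by
      intro k
      exact MeasureTheory.integral_divergence_of_hasFDerivAt_off_countable
        (a := fun _ => -(R k)) (b := fun _ => R k) (fun i => by dsimp; linarith [hR0 k]) F F' ∅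
        countable_empty hFc.continuousOn (fun x _ => hd x) hdiv.integrableOn
    -- bound a face integral by the slice lintegral
    have hface : ∀ (i : Fin (n+1)) (t : ℝ) (s : Set (Fin n → ℝ)), G i t ≠ ∞ →
        ‖∫ x : Fin n → ℝ in s, F (i.insertNth t (x : ∀ _ : Fin n, ℝ)) i‖ ≤ (G i t).toReal := by
      intro i t s hfin
      calc ‖∫ x : Fin n → ℝ in s, F (i.insertNth t (x : ∀ _ : Fin n, ℝ)) i‖
          ≤ (∫⁻ x : Fin n → ℝ in s,
              (‖F (i.insertNth t (x : ∀ _ : Fin n, ℝ)) i‖₊ : ℝ≥0∞)).toReal := by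
            have := norm_integral_le_lintegral_norm
              (μ := volume.restrict s) (f := fun x : Fin n → ℝ => F (i.insertNth t (x : ∀ _ : Fin n, ℝ)) i)
            simpa only [ofReal_norm, enorm_eq_nnnorm] using this
        _ ≤ (G i t).toReal := by
            refine ENNReal.toReal_mono hfin ?_
            refine lintegral_mono' Measure.restrict_le_self (fun y => le_of_eq ?_)
            rw [hesymm i (t, y)]
    -- the boundary terms tend to zero
    set Bd : ℕ → ℝ := fun k =>
        ∑ i : Fin (n+1),
          ((∫ x : Fin n → ℝ in Icc ((fun _ => -(R k)) ∘ i.succAbove) ((fun _ => R k) ∘ i.succAbove),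
              F (i.insertNth (R k) x) i) -
           ∫ x : Fin n → ℝ in Icc ((fun _ => -(R k)) ∘ i.succAbove) ((fun _ => R k) ∘ i.succAbove),
              F (i.insertNth (-(R k)) x) i) with hBddef
    have hGfin : ∀ (k : ℕ) (i : Fin (n+1)), G i (R k) ≠ ∞ ∧ G i (-(R k)) ≠ ∞ := by
      intro k i
      have h1 : G i (R k) + G i (-(R k)) ≤ H (R k) :=
        Finset.single_le_sum (f := fun j => G j (R k) + G j (-(R k)))
          (fun j _ => zero_le) (Finset.mem_univ i)
      have h2 : H (R k) < ∞ := lt_of_le_of_lt (hRle k) ENNReal.ofReal_lt_top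
      constructor
      · exact ne_top_of_le_ne_top h2.ne (le_trans le_self_add h1)
      · exact ne_top_of_le_ne_top h2.ne (le_trans le_add_self h1)
    have hBd : ∀ k : ℕ, ‖Bd k‖ ≤ 1/(k+1 : ℝ) := by
      intro k
      have h2 : H (R k) ≠ ∞ := (lt_of_le_of_lt (hRle k) ENNReal.ofReal_lt_top).ne
      calc ‖Bd k‖ ≤ ∑ i : Fin (n+1), ((G i (R k)).toReal + (G i (-(R k))).toReal) := by
            refine le_trans (norm_sum_le _ _) (Finset.sum_le_sum fun i _ => ?_)
            refine le_trans (norm_sub_le _ _) ?_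
            exact add_le_add (hface i (R k) _ (hGfin k i).1) (hface i (-(R k)) _ (hGfin k i).2)
        _ = (H (R k)).toReal := by
            rw [hHdef]
            rw [ENNReal.toReal_sum (fun i _ => ?_)]
            · refine Finset.sum_congr rfl fun i _ => ?_
              rw [ENNReal.toReal_add (hGfin k i).1 (hGfin k i).2]
            · exact ENNReal.add_ne_top.2 ⟨(hGfin k i).1, (hGfin k i).2⟩
        _ ≤ 1/(k+1 : ℝ) := by
            refine le_trans (ENNReal.toReal_mono ENNReal.ofReal_ne_top (hRle k)) ?_
            rw [ENNReal.toReal_ofReal (by positivity)]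
    have hBd0 : Tendsto Bd atTop (𝓝 0) := by
      refine squeeze_zero_norm hBd ?_
      simpa [one_div] using tendsto_one_div_add_atTop_nhds_zero_nat (𝕜 := ℝ)
    -- the interior integrals tend to the full integral
    have hsubset : ∀ k : ℕ, Metric.closedBall (0 : Fin (n+1) → ℝ) k ⊆
        Icc (fun _ => -(R k) : Fin (n+1) → ℝ) (fun _ => R k) := by
      intro k x hx
      rw [Metric.mem_closedBall, dist_zero_right] at hx
      have hxi : ∀ i, -R k ≤ x i ∧ x i ≤ R k := fun i =>
        abs_le.1 (((Real.norm_eq_abs (x i)) ▸ norm_le_pi_norm x i).trans (hx.trans (hRgt k).le))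
      exact ⟨fun i => (hxi i).1, fun i => (hxi i).2⟩
    have hUe : (⋃ k : ℕ, Metric.closedBall (0 : Fin (n+1) → ℝ) k) = univ := by
      refine eq_univ_iff_forall.2 fun x => mem_iUnion.2 ⟨⌈‖x‖⌉₊, ?_⟩
      rw [Metric.mem_closedBall, dist_zero_right]
      exact Nat.le_ceil _
    have hJ : Tendsto (fun k : ℕ => ∫ x in Metric.closedBall (0 : Fin (n+1) → ℝ) k, ‖div x‖)
        atTop (𝓝 (∫ x, ‖div x‖)) := by
      have := tendsto_setIntegral_of_monotone (μ := volume)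
        (f := fun x => ‖div x‖) (s := fun k : ℕ => Metric.closedBall (0 : Fin (n+1) → ℝ) k)
        (fun k => measurableSet_closedBall)
        (fun k l hkl => Metric.closedBall_subset_closedBall (by exact_mod_cast hkl))
        (by rw [hUe]; exact hdiv.norm.integrableOn)
      rwa [hUe, setIntegral_univ] at this
    have hcompl : Tendsto (fun k : ℕ => ∫ x in (Metric.closedBall (0 : Fin (n+1) → ℝ) k)ᶜ, ‖div x‖)
        atTop (𝓝 0) := by
      have heq : ∀ k : ℕ, ∫ x in (Metric.closedBall (0 : Fin (n+1) → ℝ) k)ᶜ, ‖div x‖ =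
          (∫ x, ‖div x‖) - ∫ x in Metric.closedBall (0 : Fin (n+1) → ℝ) k, ‖div x‖ := by
        intro k
        rw [eq_sub_iff_add_eq, add_comm]
        exact integral_add_compl measurableSet_closedBall hdiv.norm
      simp only [heq]
      have := (tendsto_const_nhds (x := ∫ x, ‖div x‖) (f := (atTop : Filter ℕ))).sub hJ
      simpa using this
    have hIk : ∀ k : ℕ, ‖(∫ x, div x) -
        ∫ x in Icc (fun _ => -(R k) : Fin (n+1) → ℝ) (fun _ => R k), div x‖ ≤
        ∫ x in (Metric.closedBall (0 : Fin (n+1) → ℝ) k)ᶜ, ‖div x‖ := by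
      intro k
      have h1 : (∫ x, div x) -
          (∫ x in Icc (fun _ => -(R k) : Fin (n+1) → ℝ) (fun _ => R k), div x) =
          ∫ x in (Icc (fun _ => -(R k) : Fin (n+1) → ℝ) (fun _ => R k))ᶜ, div x := by
        have h2 : (∫ x in Icc (fun _ => -(R k) : Fin (n+1) → ℝ) (fun _ => R k), div x) +
            ∫ x in (Icc (fun _ => -(R k) : Fin (n+1) → ℝ) (fun _ => R k))ᶜ, div x =
            ∫ x, div x := integral_add_compl measurableSet_Icc hdiv
        linarith
      rw [h1]
      refine le_trans (norm_integral_le_integral_norm _) ?_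
      refine setIntegral_mono_set hdiv.norm.integrableOn
        (Eventually.of_forall fun x => norm_nonneg _) (HasSubset.Subset.eventuallyLE ?_)
      exact compl_subset_compl.2 (hsubset k)
    have hint : Tendsto (fun k : ℕ =>
        ∫ x in Icc (fun _ => -(R k) : Fin (n+1) → ℝ) (fun _ => R k), div x) atTop
        (𝓝 (∫ x, div x)) := by
      rw [tendsto_iff_norm_sub_tendsto_zero]
      refine squeeze_zero_norm (fun k => ?_) hcompl
      rw [norm_norm, norm_sub_rev]
      exact hIk k
    have hint' : Tendsto (fun k : ℕ =>
        ∫ x in Icc (fun _ => -(R k) : Fin (n+1) → ℝ) (fun _ => R k), div x) atTop (𝓝 0) := by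
      have : (fun k : ℕ =>
          ∫ x in Icc (fun _ => -(R k) : Fin (n+1) → ℝ) (fun _ => R k), div x) = Bd := by
        funext k; exact hdivthm k
      rw [this]; exact hBd0
    exact tendsto_nhds_unique hint hint'

open scoped RealInnerProductSpace

private lemma fderiv_apply_eq_inner {d : ℕ} (f : EuclideanSpace ℝ (Fin d) → ℝ)
    (x v : EuclideanSpace ℝ (Fin d)) : fderiv ℝ f x v = ⟪gradient f x, v⟫ := by
  rw [gradient, InnerProductSpace.toDual_symm_apply]

/-- The Euclidean Laplacian `Δf(x) = ∑ᵢ ∂²f/∂xᵢ²(x)`. -/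
noncomputable def eLaplacian {d : ℕ} (f : EuclideanSpace ℝ (Fin d) → ℝ)
    (x : EuclideanSpace ℝ (Fin d)) : ℝ :=
  ∑ i : Fin d,
    fderiv ℝ (fun y => fderiv ℝ f y (EuclideanSpace.single i (1 : ℝ))) x
      (EuclideanSpace.single i (1 : ℝ))

/-- weighted `W^{1,1}_V` bound: with a smooth weight `V`
(`∫ e^{-V} = 1`, `|∇V| ≤ γ < 2λ`, `∫ (|x|+1)e^{-V} < ∞`) there is a constant
`C'` (uniform in `ψ`) such that any `C²` function `ψ` satisfying pointwise
`(1/2)Δψ + λ|∇ψ| ≤ C(|x| + C(ε))` has `‖∇ψ‖_{L¹_V} ≤ C'`. -/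
theorem weighted_gradient_L1_bound (d : ℕ) (lam gam C Ceps : ℝ)
    (hlam : 0 < lam) (hgam : 0 ≤ gam) (hga : gam < 2 * lam) (hC : 0 < C)
    (hCe : 0 ≤ Ceps)
    (V : EuclideanSpace ℝ (Fin d) → ℝ) (hV : ContDiff ℝ (⊤ : ℕ∞) V)
    (hV1 : ∫ x, Real.exp (-V x) = 1)
    (hVgrad : ∀ x, ‖gradient V x‖ ≤ gam)
    (hVmom : Integrable (fun x => (‖x‖ + 1) * Real.exp (-V x)) volume) :
    ∃ C' : ℝ, ∀ ψ : EuclideanSpace ℝ (Fin d) → ℝ, ContDiff ℝ 2 ψ →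
      (∀ x, (1 / 2) * eLaplacian ψ x + lam * ‖gradient ψ x‖
        ≤ C * (‖x‖ + Ceps)) →
      Integrable (fun x => ‖gradient ψ x‖ * Real.exp (-V x)) volume →
      Integrable (fun x => eLaplacian ψ x * Real.exp (-V x)) volume →
      ∫ x, ‖gradient ψ x‖ * Real.exp (-V x) ≤ C' := by
  classical
  have hlg : 0 < lam - gam/2 := by linarith
  refine ⟨(C * max 1 Ceps * ∫ x, (‖x‖ + 1) * Real.exp (-V x)) / (lam - gam/2), ?_⟩
  intro ψ hψ hineq hI1 hI2
  have hVd : Differentiable ℝ V := hV.differentiable (by simp)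
  have hψd : Differentiable ℝ ψ := hψ.differentiable (by norm_num)
  have hfd1 : ContDiff ℝ 1 (fderiv ℝ ψ) := hψ.fderiv_right (by norm_num)
  have hfdV : ContDiff ℝ 1 (fderiv ℝ V) := hV.fderiv_right (by exact WithTop.coe_le_coe.2 le_top)
  have hgradψc : Continuous (gradient ψ) := by
    have : Continuous fun x =>
        (InnerProductSpace.toDual ℝ (EuclideanSpace ℝ (Fin d))).symm (fderiv ℝ ψ x) :=
      (InnerProductSpace.toDual ℝ (EuclideanSpace ℝ (Fin d))).symm.continuous.comp
        hfd1.continuous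
    exact this
  have hgradVc : Continuous (gradient V) := by
    have : Continuous fun x =>
        (InnerProductSpace.toDual ℝ (EuclideanSpace ℝ (Fin d))).symm (fderiv ℝ V x) :=
      (InnerProductSpace.toDual ℝ (EuclideanSpace ℝ (Fin d))).symm.continuous.comp
        hfdV.continuous
    exact this
  have hexpc : Continuous fun y : EuclideanSpace ℝ (Fin d) => Real.exp (-V y) :=
    Real.continuous_exp.comp hV.continuous.neg
  -- integrability of the inner-product term
  have hinner_int : Integrable
      (fun y => (⟪gradient V y, gradient ψ y⟫) * Real.exp (-V y)) volume := by
    refine (hI1.const_mul gam).mono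
      (((hgradVc.inner hgradψc).mul hexpc).aestronglyMeasurable)
      (Eventually.of_forall fun y => ?_)
    have h1 := abs_real_inner_le_norm (gradient V y) (gradient ψ y)
    have h2 := hVgrad y
    have h3 := (Real.exp_pos (-V y)).le
    have h4 := norm_nonneg (gradient ψ y)
    have h5 := abs_nonneg (⟪gradient V y, gradient ψ y⟫)
    rw [Real.norm_eq_abs, Real.norm_eq_abs, abs_mul, Real.abs_exp, abs_mul, abs_mul]
    rw [Real.abs_exp, abs_norm, abs_of_nonneg hgam, ← mul_assoc]
    exact mul_le_mul_of_nonneg_right (h1.trans (mul_le_mul_of_nonneg_right h2 h4)) h3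
  -- *** integration by parts ***
  have key : ∫ x, eLaplacian ψ x * Real.exp (-V x) =
      ∫ x, (⟪gradient V x, gradient ψ x⟫) * Real.exp (-V x) := by
    set g : Fin d → EuclideanSpace ℝ (Fin d) → ℝ :=
      fun i y => Real.exp (-V y) * fderiv ℝ ψ y (EuclideanSpace.single i 1) with hgdef
    set Dg : Fin d → EuclideanSpace ℝ (Fin d) → (EuclideanSpace ℝ (Fin d) →L[ℝ] ℝ) :=
      fun i y => Real.exp (-V y) •
          fderiv ℝ (fun z => fderiv ℝ ψ z (EuclideanSpace.single i 1)) y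
        + (fderiv ℝ ψ y (EuclideanSpace.single i 1)) •
            (Real.exp (-V y) • (-fderiv ℝ V y)) with hDgdef
    have hgd : ∀ (i : Fin d) (y : EuclideanSpace ℝ (Fin d)), HasFDerivAt (g i) (Dg i y) y := by
      intro i y
      have h1 : HasFDerivAt (fun z => Real.exp (-V z))
          (Real.exp (-V y) • (-fderiv ℝ V y)) y := ((hVd y).hasFDerivAt.neg).exp
      have h2 : HasFDerivAt (fun z => fderiv ℝ ψ z (EuclideanSpace.single i 1))
          (fderiv ℝ (fun z => fderiv ℝ ψ z (EuclideanSpace.single i 1)) y) y :=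
        (((hfd1.clm_apply contDiff_const).differentiable (by norm_num)) y).hasFDerivAt
      exact h1.mul h2
    have hdiveq : ∀ y, ∑ i, Dg i y (EuclideanSpace.single i (1:ℝ)) =
        Real.exp (-V y) * (eLaplacian ψ y - ⟪gradient V y, gradient ψ y⟫) := by
      intro y
      have hsum : ∑ i, fderiv ℝ V y (EuclideanSpace.single i (1:ℝ)) *
          fderiv ℝ ψ y (EuclideanSpace.single i (1:ℝ)) = ⟪gradient V y, gradient ψ y⟫ := by
        have hb := (EuclideanSpace.basisFun (Fin d) ℝ).sum_inner_mul_inner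
          (gradient V y) (gradient ψ y)
        simp only [EuclideanSpace.basisFun_apply] at hb
        rw [← hb]
        refine Finset.sum_congr rfl fun i _ => ?_
        rw [fderiv_apply_eq_inner, fderiv_apply_eq_inner,
          real_inner_comm (gradient ψ y) (EuclideanSpace.single i (1:ℝ))]
      simp only [hDgdef, ContinuousLinearMap.add_apply, ContinuousLinearMap.smul_apply,
        ContinuousLinearMap.neg_apply, smul_eq_mul]
      rw [Finset.sum_add_distrib, ← Finset.mul_sum, mul_sub]
      congr 1
      rw [← hsum, Finset.mul_sum, ← Finset.sum_neg_distrib]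
      exact Finset.sum_congr rfl fun i _ => by ring
    set toE : (Fin d → ℝ) ≃L[ℝ] EuclideanSpace ℝ (Fin d) :=
      (EuclideanSpace.equiv (Fin d) ℝ).symm with htoEdef
    set F : (Fin d → ℝ) → (Fin d → ℝ) := fun x i => g i (toE x) with hFdef
    set F' : (Fin d → ℝ) → ((Fin d → ℝ) →L[ℝ] (Fin d → ℝ)) :=
      fun x => ContinuousLinearMap.pi fun i =>
        (Dg i (toE x)).comp (toE : (Fin d → ℝ) →L[ℝ] EuclideanSpace ℝ (Fin d)) with hF'def
    have hdF : ∀ x, HasFDerivAt F (F' x) x := by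
      intro x
      rw [hasFDerivAt_pi']
      intro i
      rw [hF'def, ContinuousLinearMap.proj_pi]
      exact (hgd i (toE x)).comp x toE.hasFDerivAt
    have hdivF : ∀ x, ∑ i, F' x (Pi.single i 1) i =
        Real.exp (-V (toE x)) * (eLaplacian ψ (toE x) -
          ⟪gradient V (toE x), gradient ψ (toE x)⟫) := by
      intro x
      rw [← hdiveq (toE x)]
      refine Finset.sum_congr rfl fun i _ => ?_
      rfl
    have mp : MeasurePreserving (⇑toE) (volume : Measure (Fin d → ℝ)) volume :=
      (EuclideanSpace.volume_preserving_symm_measurableEquiv_toLp (Fin d)).symm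
    have memb : MeasurableEmbedding (⇑toE) :=
      (MeasurableEquiv.toLp 2 (Fin d → ℝ)).measurableEmbedding
    have hginti : ∀ i, Integrable (g i) (volume : Measure (EuclideanSpace ℝ (Fin d))) := by
      intro i
      refine hI1.mono
        ((hexpc.mul (hfd1.clm_apply contDiff_const).continuous).aestronglyMeasurable)
        (Eventually.of_forall fun y => ?_)
      rw [hgdef]
      rw [Real.norm_eq_abs, Real.norm_eq_abs, abs_mul, Real.abs_exp, abs_mul, Real.abs_exp,
        abs_norm]
      have h1 : |fderiv ℝ ψ y (EuclideanSpace.single i (1:ℝ))| ≤ ‖gradient ψ y‖ := by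
        rw [fderiv_apply_eq_inner]
        refine le_trans (abs_real_inner_le_norm _ _) ?_
        rw [EuclideanSpace.norm_single]
        simp
      have h3 := (Real.exp_pos (-V y)).le
      nlinarith [norm_nonneg (gradient ψ y)]
    have hdivint_E : Integrable (fun y => Real.exp (-V y) *
        (eLaplacian ψ y - ⟪gradient V y, gradient ψ y⟫)) volume := by
      refine (hI2.sub hinner_int).congr (Eventually.of_forall fun y => ?_)
      simp only [Pi.sub_apply]; ring
    have h0 : ∫ x, ∑ i, F' x (Pi.single i 1) i = 0 := by
      refine integral_divergence_eq_zero F F' hdF (fun i => ?_) ?_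
      · exact (mp.integrable_comp_emb memb (g := g i)).2 (hginti i)
      · refine ((mp.integrable_comp_emb memb (g := fun y => Real.exp (-V y) *
            (eLaplacian ψ y - ⟪gradient V y, gradient ψ y⟫))).2 hdivint_E).congr
          (Eventually.of_forall fun x => ?_)
        exact (hdivF x).symm
    have h1 : ∫ y, Real.exp (-V y) *
        (eLaplacian ψ y - ⟪gradient V y, gradient ψ y⟫) = 0 := by
      calc ∫ y, Real.exp (-V y) * (eLaplacian ψ y - ⟪gradient V y, gradient ψ y⟫)
          = ∫ x : Fin d → ℝ, Real.exp (-V (toE x)) * (eLaplacian ψ (toE x) -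
              ⟪gradient V (toE x), gradient ψ (toE x)⟫) :=
            (mp.integral_comp memb _).symm
        _ = ∫ x, ∑ i, F' x (Pi.single i 1) i :=
            integral_congr_ae (Eventually.of_forall fun x => (hdivF x).symm)
        _ = 0 := h0
    have h2 : ∫ y, (eLaplacian ψ y * Real.exp (-V y) -
        (⟪gradient V y, gradient ψ y⟫) * Real.exp (-V y)) = 0 := by
      rw [← h1]
      exact integral_congr_ae (Eventually.of_forall fun y => by ring)
    rw [integral_sub hI2 hinner_int] at h2
    linarith
  -- lower bound for the inner-product integral
  have hIneg : -gam * (∫ x, ‖gradient ψ x‖ * Real.exp (-V x)) ≤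
      ∫ x, (⟪gradient V x, gradient ψ x⟫) * Real.exp (-V x) := by
    rw [← integral_const_mul]
    refine integral_mono (hI1.const_mul _) hinner_int fun y => ?_
    have h1 := abs_real_inner_le_norm (gradient V y) (gradient ψ y)
    have h2 := hVgrad y
    have h3 := (Real.exp_pos (-V y)).le
    have h4 := norm_nonneg (gradient ψ y)
    have h5 := neg_abs_le (⟪gradient V y, gradient ψ y⟫)
    have h6 : -(gam * ‖gradient ψ y‖) ≤ ⟪gradient V y, gradient ψ y⟫ := by
      nlinarith [mul_le_mul_of_nonneg_right h2 h4]
    have h7 := mul_le_mul_of_nonneg_right h6 h3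
    nlinarith [h7]
  -- integrate the pointwise inequality
  have hpoint : ∫ x, ((1/2) * eLaplacian ψ x + lam * ‖gradient ψ x‖) * Real.exp (-V x) ≤
      ∫ x, (C * max 1 Ceps) * ((‖x‖ + 1) * Real.exp (-V x)) := by
    refine integral_mono ?_ (hVmom.const_mul _) fun x => ?_
    · refine ((hI2.const_mul (1/2)).add (hI1.const_mul lam)).congr
        (Eventually.of_forall fun y => ?_)
      simp only [Pi.add_apply]
      ring
    · have h := hineq x
      have he := (Real.exp_pos (-V x)).le
      have hm1 := le_max_left (1:ℝ) Ceps
      have hm2 := le_max_right (1:ℝ) Ceps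
      have hbound : C * (‖x‖ + Ceps) ≤ C * max 1 Ceps * (‖x‖ + 1) := by
        nlinarith [mul_nonneg (mul_nonneg hC.le (sub_nonneg.2 hm1)) (norm_nonneg x),
          mul_le_mul_of_nonneg_left hm2 hC.le]
      nlinarith [mul_le_mul_of_nonneg_right (h.trans hbound) he]
  have hexpand : ∫ x, ((1/2) * eLaplacian ψ x + lam * ‖gradient ψ x‖) * Real.exp (-V x) =
      (1/2) * (∫ x, eLaplacian ψ x * Real.exp (-V x)) +
        lam * ∫ x, ‖gradient ψ x‖ * Real.exp (-V x) := by
    have h1 : (fun x : EuclideanSpace ℝ (Fin d) =>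
        ((1/2) * eLaplacian ψ x + lam * ‖gradient ψ x‖) * Real.exp (-V x)) =
        fun x => (1/2) * (eLaplacian ψ x * Real.exp (-V x)) +
          lam * (‖gradient ψ x‖ * Real.exp (-V x)) := by
      funext x; ring
    rw [h1, integral_add (hI2.const_mul _) (hI1.const_mul _), integral_const_mul,
      integral_const_mul]
  rw [hexpand, integral_const_mul] at hpoint
  rw [le_div_iff₀ hlg]
  nlinarith [hpoint, hIneg, key]
end

section
/- If R ↦ ψ^R(x) - C(x)R² is monotonically non-increasing in R for every x, then the pointwise representative ψ*(x) := lim_{R→0} ψ^R(x) exists (possibly +∞... but here finite a.e.), equals ψ a.e., and is lower semi-continuous. -/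
/-!
Writing `g x R = ψ^R(x) - C(x) R²`, the hypothesis says that `R ↦ g x R` is antitone on `(0, 1)`,
so `ψ*(x) := sup_{0<R<1} g x R` is the limit of `g x R`, hence of `ψ^R(x) = g x R + C(x) R²`,
as `R → 0⁺`. Each `g · R` is continuous, since ball averages of a locally integrable function
depend continuously on the centre, so `ψ*` is lower semicontinuous as a supremum of continuous
functions; and `ψ* = ψ` a.e. by the Lebesgue differentiation theorem.
-/

open MeasureTheory Filter Set Metric Topology

theorem continuousAt_indicator_ball_apply {E F : Type*} [NormedAddCommGroup E] [NormedSpace ℝ E]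
    [TopologicalSpace F] [Zero F] (f : E → F) {R : ℝ} (hR : R ≠ 0) {x₀ y : E}
    (hy : y ∉ sphere x₀ R) : ContinuousAt (fun x => (ball x R).indicator f y) x₀ := by
  have hswap : (fun x => (ball x R).indicator f y) = (ball y R).indicator fun _ => f y := by
    ext x
    simp only [indicator, mem_ball, dist_comm]
  rw [hswap]
  refine continuousOn_const.continuousAt_indicator ?_
  rwa [frontier_ball y hR, mem_sphere_comm]

section BallAverage

variable {E F : Type*} [NormedAddCommGroup E] [NormedSpace ℝ E] [FiniteDimensional ℝ E]
  [MeasurableSpace E] [BorelSpace E] (μ : Measure E) [μ.IsAddHaarMeasure]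
  [NormedAddCommGroup F] [NormedSpace ℝ F]

theorem ball_ae_eq_closedBall (x : E) {r : ℝ} (hr : r ≠ 0) : ball x r =ᵐ[μ] closedBall x r :=
  ae_eq_set.2 ⟨by simp [sdiff_eq_empty.2 ball_subset_closedBall],
    by rw [closedBall_sdiff_ball]; exact Measure.addHaar_sphere_of_ne_zero μ x hr⟩

theorem continuous_setIntegral_ball {ψ : E → F} (hψ : LocallyIntegrable ψ μ) {R : ℝ}
    (hR : 0 < R) : Continuous fun x => ∫ y in ball x R, ψ y ∂μ := by
  simp_rw [← integral_indicator measurableSet_ball]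
  refine continuous_iff_continuousAt.2 fun x₀ =>
    continuousAt_of_dominated (bound := (closedBall x₀ (R + 1)).indicator fun y => ‖ψ y‖)
      (Eventually.of_forall fun x => hψ.aestronglyMeasurable.indicator measurableSet_ball)
      ?_ ?_ ?_
  · filter_upwards [ball_mem_nhds x₀ one_pos] with x hx
    refine Eventually.of_forall fun y => ?_
    by_cases hy : y ∈ ball x R
    · have hy' : y ∈ closedBall x₀ (R + 1) := by
        rw [mem_ball] at hx hy
        rw [mem_closedBall]
        linarith [dist_triangle y x x₀]
      simp [indicator_of_mem hy, indicator_of_mem hy']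
    · simpa [indicator_of_notMem hy] using
        indicator_nonneg (fun _ _ => norm_nonneg _) y
  · exact (integrable_indicator_iff measurableSet_closedBall).2
      (hψ.integrableOn_isCompact (isCompact_closedBall x₀ (R + 1))).norm
  · have hsphere : ∀ᵐ y ∂μ, y ∉ sphere x₀ R :=
      measure_eq_zero_iff_ae_notMem.1 (Measure.addHaar_sphere_of_ne_zero μ x₀ hR.ne')
    filter_upwards [hsphere] with y hy
    exact continuousAt_indicator_ball_apply ψ hR.ne' hy

theorem continuous_setAverage_ball {ψ : E → F} (hψ : LocallyIntegrable ψ μ) {R : ℝ}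
    (hR : 0 < R) : Continuous fun x => ⨍ y in ball x R, ψ y ∂μ := by
  simp_rw [setAverage_eq, Measure.addHaar_real_ball_center μ _ R]
  exact continuous_const.smul (continuous_setIntegral_ball μ hψ hR)

theorem ae_tendsto_setAverage_ball [CompleteSpace F] {ψ : E → F} (hψ : LocallyIntegrable ψ μ) :
    ∀ᵐ x ∂μ, Tendsto (fun r => ⨍ y in ball x r, ψ y ∂μ) (𝓝[>] 0) (𝓝 (ψ x)) := by
  filter_upwards [IsUnifLocDoublingMeasure.ae_tendsto_average μ hψ 1] with x hx
  have hclosed : Tendsto (fun r => ⨍ y in closedBall x r, ψ y ∂μ) (𝓝[>] 0) (𝓝 (ψ x)) :=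
    hx (fun _ => x) id tendsto_id <| by
      filter_upwards [self_mem_nhdsWithin] with r hr
      exact mem_closedBall_self (by simpa using le_of_lt hr)
  refine hclosed.congr' ?_
  filter_upwards [self_mem_nhdsWithin] with r hr
  exact setAverage_congr (ball_ae_eq_closedBall μ x (ne_of_gt hr)).symm

end BallAverage

theorem tendsto_coe_add_sSup_of_antitoneOn {g h : ℝ → ℝ} {a b : ℝ} (hab : a < b)
    (hg : AntitoneOn g (Ioo a b)) (hh : Tendsto h (𝓝[>] a) (𝓝 0)) :
    Tendsto (fun R => ((g R + h R : ℝ) : EReal)) (𝓝[>] a)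
      (𝓝 (sSup ((fun R => (g R : EReal)) '' Ioo a b))) := by
  set S := sSup ((fun R => (g R : EReal)) '' Ioo a b)
  have hgS : Tendsto (fun R => (g R : EReal)) (𝓝[>] a) (𝓝 S) :=
    AntitoneOn.tendsto_nhdsWithin_Ioo_right (nonempty_Ioo.2 hab)
      (fun _ hx _ hy hxy => EReal.coe_le_coe (hg hx hy hxy)) (OrderTop.bddAbove _)
  have hh' : Tendsto (fun R => (h R : EReal)) (𝓝[>] a) (𝓝 0) :=
    (continuous_coe_real_ereal.tendsto 0).comp hh
  have hadd := (EReal.continuousAt_add (p := (S, 0)) (Or.inr (by simp)) (Or.inr (by simp))).tendsto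
  simpa only [Function.comp_def, EReal.coe_add, add_zero] using hadd.comp (hgS.prodMk_nhds hh')

theorem monotone_averages_lsc_representative_general (d : ℕ)
    (ψ : EuclideanSpace ℝ (Fin d) → ℝ)
    (hloc : LocallyIntegrable ψ volume)
    (C : EuclideanSpace ℝ (Fin d) → ℝ) (hCc : Continuous C)
    (hmono : ∀ x, ∀ R₁ R₂ : ℝ, 0 < R₁ → R₁ < R₂ → R₂ ≤ 1 →
      (⨍ y in Metric.ball x R₂, ψ y) - C x * R₂ ^ 2 ≤
        (⨍ y in Metric.ball x R₁, ψ y) - C x * R₁ ^ 2) :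
    ∃ ψs : EuclideanSpace ℝ (Fin d) → EReal,
      (∀ x, Tendsto (fun R : ℝ => (((⨍ y in Metric.ball x R, ψ y) : ℝ) : EReal))
        (nhdsWithin 0 (Set.Ioi 0)) (nhds (ψs x))) ∧
      (∀ᵐ x ∂(volume : Measure (EuclideanSpace ℝ (Fin d))),
        ψs x = ((ψ x : ℝ) : EReal)) ∧
      LowerSemicontinuous ψs := by
  set g := fun x R => (⨍ y in ball x R, ψ y) - C x * R ^ 2
  have hlim : ∀ x, Tendsto (fun R : ℝ => (((⨍ y in ball x R, ψ y) : ℝ) : EReal)) (𝓝[>] 0)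
      (𝓝 (sSup ((fun R => (g x R : EReal)) '' Ioo 0 1))) := by
    intro x
    have hanti : AntitoneOn (g x) (Ioo 0 1) := fun R₁ h₁ R₂ h₂ h₁₂ =>
      h₁₂.eq_or_lt.elim (fun h => h ▸ le_rfl) fun h => hmono x R₁ R₂ h₁.1 h h₂.2.le
    have hquad : Tendsto (fun R : ℝ => C x * R ^ 2) (𝓝[>] 0) (𝓝 0) :=
      ((continuous_const.mul (continuous_pow 2)).tendsto' 0 0 (by simp)).mono_left
        nhdsWithin_le_nhds
    simpa only [g, sub_add_cancel] using tendsto_coe_add_sSup_of_antitoneOn one_pos hanti hquad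
  refine ⟨_, hlim, ?_, ?_⟩
  · filter_upwards [ae_tendsto_setAverage_ball volume hloc] with x hx
    exact tendsto_nhds_unique (hlim x) ((continuous_coe_real_ereal.tendsto _).comp hx)
  · simp_rw [sSup_image]
    refine lowerSemicontinuous_biSup fun R hR => Continuous.lowerSemicontinuous ?_
    exact continuous_coe_real_ereal.comp
      ((continuous_setAverage_ball volume hloc hR.1).sub (hCc.mul continuous_const))

/-- if `ψ` is locally integrable and its ball averages
`ψ^R(x) = ⨍_{B(x,R)} ψ` satisfy that `R ↦ ψ^R(x) - C(x)R²` is monotonically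
non-increasing in `R` (for `0 < R ≤ 1`, with `C` continuous and nonnegative),
then the pointwise representative `ψ*(x) = lim_{R→0⁺} ψ^R(x)` exists in
`ℝ ∪ {+∞}`, equals `ψ` almost everywhere (in particular is finite a.e.), and
is lower semi-continuous. -/
theorem monotone_averages_lsc_representative (d : ℕ)
    (ψ : EuclideanSpace ℝ (Fin d) → ℝ)
    (hloc : LocallyIntegrable ψ volume)
    (C : EuclideanSpace ℝ (Fin d) → ℝ) (hCc : Continuous C)
    (hC0 : ∀ x, 0 ≤ C x)
    (hmono : ∀ x, ∀ R₁ R₂ : ℝ, 0 < R₁ → R₁ < R₂ → R₂ ≤ 1 →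
      (⨍ y in Metric.ball x R₂, ψ y) - C x * R₂ ^ 2 ≤
        (⨍ y in Metric.ball x R₁, ψ y) - C x * R₁ ^ 2) :
    ∃ ψs : EuclideanSpace ℝ (Fin d) → EReal,
      (∀ x, Tendsto (fun R : ℝ => (((⨍ y in Metric.ball x R, ψ y) : ℝ) : EReal))
        (nhdsWithin 0 (Set.Ioi 0)) (nhds (ψs x))) ∧
      (∀ᵐ x ∂(volume : Measure (EuclideanSpace ℝ (Fin d))),
        ψs x = ((ψ x : ℝ) : EReal)) ∧
      LowerSemicontinuous ψs :=
  monotone_averages_lsc_representative_general d ψ hloc C hCc hmono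
end
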